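/- Let (X,d) be a metric space, f:X→ℝ Lipschitz, p∈(1,∞) with dual exponent q=p/(p−1), and Q_t f the Hopf-Lax semigroup. Then for every x∈X, the map t ↦ Q_t f(x) is Lipschitz on [0,∞), and for every t>0 with at most countably many exceptions one has d/dt Q_t f(x) = −(1/q)[D^±(x,t)/t]^p. -/

import Mathlib

open Filter Set
open scoped ENNReal NNReal Topology

variable {X : Type*}

/- The Hopf-Lax integrand `F(t,x,y) = f(y) + d(x,y)^p / (p t^(p-1))`. -/
noncomputable def HLF [MetricSpace X] (f : X → ℝ) (p t : ℝ) (x y : X) : ℝ :=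
  f y + dist x y ^ p / (p * t ^ (p - 1))

/- `y : ℕ → X` is a minimizing sequence of `F(t,x,·)`. -/
def IsMinSeq [MetricSpace X] (f : X → ℝ) (p t : ℝ) (x : X) (y : ℕ → X) : Prop :=
  Tendsto (fun n => HLF f p t x (y n)) atTop (nhds (⨅ z, HLF f p t x z))

/- `D^+(x,t)`: the supremum, over minimizing sequences, of `limsup_n d(x, y_n)`;
`D^+(x,0) = 0`. -/
noncomputable def Dplus [MetricSpace X] (f : X → ℝ) (p : ℝ) (x : X) (t : ℝ) : ℝ :=
  if t = 0 then 0 else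
    sSup {L | ∃ y : ℕ → X, IsMinSeq f p t x y ∧
      L = limsup (fun n => dist x (y n)) atTop}

/- `D^-(x,t)`: the infimum, over minimizing sequences, of `liminf_n d(x, y_n)`;
`D^-(x,0) = 0`. -/
noncomputable def Dminus [MetricSpace X] (f : X → ℝ) (p : ℝ) (x : X) (t : ℝ) : ℝ :=
  if t = 0 then 0 else
    sInf {L | ∃ y : ℕ → X, IsMinSeq f p t x y ∧
      L = liminf (fun n => dist x (y n)) atTop}

/- The Hopf-Lax semigroup `Q_t f(x)`, with `Q_0 f = f`. -/
noncomputable def QHL [MetricSpace X] (f : X → ℝ) (p t : ℝ) (x : X) : ℝ :=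
  if t = 0 then f x else ⨅ y, HLF f p t x y

/- **Statement 3** (Time derivative of `Q_t f`). For Lipschitz `f`, `p ∈ (1,∞)` with dual
exponent `q`, the map `t ↦ Q_t f(x)` is Lipschitz on `[0,∞)` and, off a countable set of
times `t > 0`, `D^+(x,t) = D^-(x,t)` and `d/dt Q_t f(x) = -(1/q) (D^±(x,t)/t)^p`. -/
section Aux

variable [MetricSpace X] {f : X → ℝ} {K : ℝ≥0} {p q : ℝ} {x : X}

lemma countable_of_intervals {S : Set ℝ} {a b : ℝ → ℝ}
    (h1 : ∀ t ∈ S, a t < b t) (h2 : ∀ s ∈ S, ∀ t ∈ S, s < t → b s ≤ a t) :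
    S.Countable := by
  have h : ∀ t ∈ S, ∃ r : ℚ, a t < (r : ℝ) ∧ (r : ℝ) < b t := fun t ht =>
    exists_rat_btwn (h1 t ht)
  choose! r hr1 hr2 using h
  have hmono : ∀ u ∈ S, ∀ v ∈ S, u < v → r u < r v := by
    intro u hu v hv huv
    have : ((r u : ℚ) : ℝ) < ((r v : ℚ) : ℝ) :=
      lt_of_lt_of_le (hr2 u hu) (le_trans (h2 u hu v hv huv) (le_of_lt (hr1 v hv)))
    exact_mod_cast this
  have hinj : InjOn (fun t => Encodable.encode (r t)) S := by
    intro u hu v hv he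
    have : r u = r v := Encodable.encode_injective he
    rcases lt_trichotomy u v with h | h | h
    · exact absurd this (ne_of_lt (hmono u hu v hv h))
    · exact h
    · exact absurd this.symm (ne_of_lt (hmono v hv u hu h))
  exact countable_iff_exists_injOn.2 ⟨_, hinj⟩

lemma hlf_shift (hp : 1 < p) {s t : ℝ} (hs : 0 < s) (ht : 0 < t) (x y : X) :
    HLF f p s x y =
      HLF f p t x y + ((s ^ (1 - p) - t ^ (1 - p)) / p) * dist x y ^ p := by
  have h1 : (0:ℝ) < s ^ (p - 1) := Real.rpow_pos_of_pos hs _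
  have h2 : (0:ℝ) < t ^ (p - 1) := Real.rpow_pos_of_pos ht _
  have hp0 : (0:ℝ) < p := by linarith
  have hs' : s ^ (1 - p) = (s ^ (p - 1))⁻¹ := by
    rw [← neg_sub p 1, Real.rpow_neg hs.le]
  have ht' : t ^ (1 - p) = (t ^ (p - 1))⁻¹ := by
    rw [← neg_sub p 1, Real.rpow_neg ht.le]
  unfold HLF
  rw [hs', ht']
  field_simp
  ring

lemma hlf_lb (hf : LipschitzWith K f) (hpq : p.HolderConjugate q) {t : ℝ} (ht : 0 < t)
    (x y : X) : f x - (K : ℝ) ^ q * t / q ≤ HLF f p t x y := by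
  set d := dist x y with hd
  have hd0 : 0 ≤ d := dist_nonneg
  have hp0 : 0 < p := hpq.pos
  have hq0 : 0 < q := hpq.symm.pos
  have hfd : f x - f y ≤ (K : ℝ) * d := by
    have h := hf.dist_le_mul x y
    rw [Real.dist_eq] at h
    have := abs_le.mp h
    linarith [this.2]
  have hc : (0:ℝ) < t ^ ((p - 1) / p) := Real.rpow_pos_of_pos ht _
  have hy := Real.young_inequality_of_nonneg
    (div_nonneg hd0 hc.le) (mul_nonneg K.coe_nonneg hc.le) hpq
  have hab : d / t ^ ((p - 1) / p) * ((K : ℝ) * t ^ ((p - 1) / p)) = (K : ℝ) * d := by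
    field_simp
  have hap : (d / t ^ ((p - 1) / p)) ^ p = d ^ p / t ^ (p - 1) := by
    rw [Real.div_rpow hd0 hc.le, ← Real.rpow_mul ht.le]
    congr 1
    field_simp
  have hbq : ((K : ℝ) * t ^ ((p - 1) / p)) ^ q = (K : ℝ) ^ q * t := by
    rw [Real.mul_rpow K.coe_nonneg hc.le, ← Real.rpow_mul ht.le]
    congr 1
    rw [div_mul_eq_mul_div, hpq.sub_one_mul_conj]
    field_simp
    exact Real.rpow_one t
  rw [hab, hap, hbq] at hy
  have ht1 : (0:ℝ) < t ^ (p - 1) := Real.rpow_pos_of_pos ht _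
  have : (K : ℝ) * d ≤ d ^ p / (p * t ^ (p - 1)) + (K : ℝ) ^ q * t / q := by
    have : d ^ p / t ^ (p - 1) / p = d ^ p / (p * t ^ (p - 1)) := by
      rw [div_div, mul_comm]
    linarith [hy, this.ge, this.le]
  unfold HLF
  linarith

lemma hlf_bddBelow (hf : LipschitzWith K f) (hp : 1 < p) {t : ℝ} (ht : 0 < t) :
    BddBelow (Set.range (fun y => HLF f p t x y)) := by
  have hpq := Real.HolderConjugate.conjExponent hp
  exact ⟨f x - (K : ℝ) ^ p.conjExponent * t / p.conjExponent, by
    rintro _ ⟨y, rfl⟩; exact hlf_lb hf hpq ht x y⟩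

lemma qhl_lb (hf : LipschitzWith K f) (hpq : p.HolderConjugate q) {t : ℝ} (ht : 0 < t) :
    f x - (K : ℝ) ^ q * t / q ≤ QHL f p t x := by
  have : Nonempty X := ⟨x⟩
  rw [QHL, if_neg ht.ne']
  exact le_ciInf (hlf_lb hf hpq ht x)

lemma qhl_le_fx (hf : LipschitzWith K f) (hp : 1 < p) {t : ℝ} (ht : 0 ≤ t) :
    QHL f p t x ≤ f x := by
  have : Nonempty X := ⟨x⟩
  rcases eq_or_lt_of_le ht with h | h
  · simp [QHL, ← h]
  · rw [QHL, if_neg h.ne']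
    refine le_trans (ciInf_le (hlf_bddBelow hf hp h) x) ?_
    have hp0 : p ≠ 0 := by positivity
    simp [HLF, dist_self, Real.zero_rpow hp0]

lemma exists_minseq (hf : LipschitzWith K f) (hp : 1 < p) {t : ℝ} (ht : 0 < t) :
    ∃ y : ℕ → X, IsMinSeq f p t x y := by
  have : Nonempty X := ⟨x⟩
  obtain ⟨u, -, hu, hmem⟩ := exists_seq_tendsto_sInf
    (Set.range_nonempty (fun y => HLF f p t x y)) (hlf_bddBelow hf hp ht)
  choose y hy using hmem
  refine ⟨y, ?_⟩
  unfold IsMinSeq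
  have hfe : (fun n => HLF f p t x (y n)) = u := funext hy
  rw [hfe, ← sInf_range]
  exact hu

lemma minseq_dist_le (hf : LipschitzWith K f) (hp : 1 < p) {t : ℝ} (ht : 0 < t)
    {y : ℕ → X} (hy : IsMinSeq f p t x y) :
    ∀ᶠ n in atTop, dist x (y n) ≤ max 1 ((p * ((K : ℝ) + 1)) ^ (1 / (p - 1))) * t := by
  have : Nonempty X := ⟨x⟩
  have hp0 : (0:ℝ) < p := by linarith
  have hp1 : (0:ℝ) < p - 1 := by linarith
  have hQ : (⨅ z, HLF f p t x z) ≤ f x := by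
    refine le_trans (ciInf_le (hlf_bddBelow hf hp ht) x) ?_
    simp [HLF, dist_self, Real.zero_rpow hp0.ne']
  have hYt : Tendsto (fun n => HLF f p t x (y n)) atTop (𝓝 (⨅ z, HLF f p t x z)) := hy
  have hev : ∀ᶠ n in atTop, HLF f p t x (y n) ≤ f x + t :=
    hYt.eventually_le_const (by linarith)
  filter_upwards [hev] with n hn
  set d := dist x (y n) with hdd
  have hd0 : (0:ℝ) ≤ d := dist_nonneg
  have hfd : f x - f (y n) ≤ (K : ℝ) * d := by
    have h := hf.dist_le_mul x (y n)
    rw [Real.dist_eq] at h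
    linarith [(abs_le.mp h).2]
  have ht1 : (0:ℝ) < t ^ (p - 1) := Real.rpow_pos_of_pos ht _
  have hkey : d ^ p / (p * t ^ (p - 1)) ≤ (K : ℝ) * d + t := by
    have : HLF f p t x (y n) = f (y n) + d ^ p / (p * t ^ (p - 1)) := rfl
    rw [this] at hn
    linarith
  rcases le_or_gt d t with hdt | hdt
  · exact hdt.trans (le_mul_of_one_le_left ht.le (le_max_left _ _))
  · have hd1 : 0 < d := lt_trans ht hdt
    have h2 : d ^ p ≤ p * ((K : ℝ) + 1) * t ^ (p - 1) * d := by
      have hmul : d ^ p ≤ (p * t ^ (p - 1)) * ((K : ℝ) * d + t) := by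
        rw [div_le_iff₀ (by positivity)] at hkey
        linarith [hkey]
      have hle1 : (K : ℝ) * d + t ≤ ((K : ℝ) + 1) * d := by nlinarith [K.coe_nonneg]
      have h4 : p * t ^ (p - 1) * ((K : ℝ) * d + t) ≤ p * t ^ (p - 1) * (((K : ℝ) + 1) * d) :=
        mul_le_mul_of_nonneg_left hle1 (by positivity)
      have h5 : p * t ^ (p - 1) * (((K : ℝ) + 1) * d) = p * ((K : ℝ) + 1) * t ^ (p - 1) * d := by
        ring
      linarith
    have hdp : d ^ p = d ^ (p - 1) * d := by
      nth_rewrite 1 [show p = (p - 1) + 1 by ring]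
      rw [Real.rpow_add_one hd1.ne' (p - 1)]
    have h3 : d ^ (p - 1) ≤ p * ((K : ℝ) + 1) * t ^ (p - 1) := by
      rw [hdp] at h2
      exact le_of_mul_le_mul_right h2 hd1
    have hC0 : (0:ℝ) ≤ p * ((K : ℝ) + 1) := by positivity
    have hle : d ^ (p - 1) ≤ ((p * ((K : ℝ) + 1)) ^ (1 / (p - 1)) * t) ^ (p - 1) := by
      rw [Real.mul_rpow (Real.rpow_nonneg hC0 _) ht.le, one_div,
        Real.rpow_inv_rpow hC0 hp1.ne']
      exact h3
    have hfin : d ≤ (p * ((K : ℝ) + 1)) ^ (1 / (p - 1)) * t :=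
      (Real.rpow_le_rpow_iff hd0 (by positivity) hp1).mp hle
    exact hfin.trans (mul_le_mul_of_nonneg_right (le_max_right _ _) ht.le)


lemma minseq_limsup_facts (hf : LipschitzWith K f) (hp : 1 < p) {t : ℝ} (ht : 0 < t)
    {y : ℕ → X} (hy : IsMinSeq f p t x y) :
    0 ≤ liminf (fun n => dist x (y n)) atTop ∧
      liminf (fun n => dist x (y n)) atTop ≤ limsup (fun n => dist x (y n)) atTop ∧
      limsup (fun n => dist x (y n)) atTop ≤
        max 1 ((p * ((K : ℝ) + 1)) ^ (1 / (p - 1))) * t := by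
  have hb : IsBoundedUnder (· ≤ ·) atTop (fun n => dist x (y n)) :=
    ⟨_, minseq_dist_le hf hp ht hy⟩
  have hb' : IsBoundedUnder (· ≥ ·) atTop (fun n => dist x (y n)) :=
    ⟨0, eventually_map.mpr (Eventually.of_forall fun n => dist_nonneg)⟩
  exact ⟨le_liminf_of_le hb.isCoboundedUnder_ge (Eventually.of_forall fun n => dist_nonneg),
    liminf_le_limsup hb hb',
    limsup_le_of_le hb'.isCoboundedUnder_le (minseq_dist_le hf hp ht hy)⟩

lemma dset_nonempty (hf : LipschitzWith K f) (hp : 1 < p) {t : ℝ} (ht : 0 < t) :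
    {L | ∃ y : ℕ → X, IsMinSeq f p t x y ∧
      L = limsup (fun n => dist x (y n)) atTop}.Nonempty := by
  obtain ⟨y, hy⟩ := exists_minseq (x := x) hf hp ht
  exact ⟨_, y, hy, rfl⟩

lemma dset_nonempty' (hf : LipschitzWith K f) (hp : 1 < p) {t : ℝ} (ht : 0 < t) :
    {L | ∃ y : ℕ → X, IsMinSeq f p t x y ∧
      L = liminf (fun n => dist x (y n)) atTop}.Nonempty := by
  obtain ⟨y, hy⟩ := exists_minseq (x := x) hf hp ht
  exact ⟨_, y, hy, rfl⟩

lemma dset_bddAbove (hf : LipschitzWith K f) (hp : 1 < p) {t : ℝ} (ht : 0 < t) :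
    BddAbove {L | ∃ y : ℕ → X, IsMinSeq f p t x y ∧
      L = limsup (fun n => dist x (y n)) atTop} := by
  refine ⟨max 1 ((p * ((K : ℝ) + 1)) ^ (1 / (p - 1))) * t, ?_⟩
  rintro _ ⟨y, hy, rfl⟩
  exact (minseq_limsup_facts hf hp ht hy).2.2

lemma dset_bddBelow' (hf : LipschitzWith K f) (hp : 1 < p) {t : ℝ} (ht : 0 < t) :
    BddBelow {L | ∃ y : ℕ → X, IsMinSeq f p t x y ∧
      L = liminf (fun n => dist x (y n)) atTop} := by
  refine ⟨0, ?_⟩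
  rintro _ ⟨y, hy, rfl⟩
  exact (minseq_limsup_facts hf hp ht hy).1

lemma dminus_nonneg (hf : LipschitzWith K f) (hp : 1 < p) {t : ℝ} (ht : 0 < t) :
    0 ≤ Dminus f p x t := by
  rw [Dminus, if_neg ht.ne']
  refine le_csInf (dset_nonempty' hf hp ht) ?_
  rintro _ ⟨y, hy, rfl⟩
  exact (minseq_limsup_facts hf hp ht hy).1

lemma dplus_le (hf : LipschitzWith K f) (hp : 1 < p) {t : ℝ} (ht : 0 < t) :
    Dplus f p x t ≤ max 1 ((p * ((K : ℝ) + 1)) ^ (1 / (p - 1))) * t := by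
  rw [Dplus, if_neg ht.ne']
  refine csSup_le (dset_nonempty hf hp ht) ?_
  rintro _ ⟨y, hy, rfl⟩
  exact (minseq_limsup_facts hf hp ht hy).2.2

lemma dminus_le_dplus (hf : LipschitzWith K f) (hp : 1 < p) {t : ℝ} (ht : 0 < t) :
    Dminus f p x t ≤ Dplus f p x t := by
  obtain ⟨y, hy⟩ := exists_minseq (x := x) hf hp ht
  rw [Dminus, if_neg ht.ne', Dplus, if_neg ht.ne']
  calc sInf _ ≤ liminf (fun n => dist x (y n)) atTop :=
        csInf_le (dset_bddBelow' hf hp ht) ⟨y, hy, rfl⟩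
    _ ≤ limsup (fun n => dist x (y n)) atTop := (minseq_limsup_facts hf hp ht hy).2.1
    _ ≤ _ := le_csSup (dset_bddAbove hf hp ht) ⟨y, hy, rfl⟩

lemma dplus_nonneg (hf : LipschitzWith K f) (hp : 1 < p) {t : ℝ} (ht : 0 < t) :
    0 ≤ Dplus f p x t :=
  le_trans (dminus_nonneg hf hp ht) (dminus_le_dplus hf hp ht)

lemma comp_upper (hf : LipschitzWith K f) (hp : 1 < p) {s t : ℝ} (hs : 0 < s) (hst : s < t) :
    QHL f p s x - QHL f p t x ≤
      ((s ^ (1 - p) - t ^ (1 - p)) / p) * (Dminus f p x t) ^ p := by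
  have ht : 0 < t := hs.trans hst
  have hne : Nonempty X := ⟨x⟩
  have hp0 : (0:ℝ) < p := by linarith
  set A := (s ^ (1 - p) - t ^ (1 - p)) / p with hA
  have hApos : 0 < A := div_pos
    (sub_pos.2 (Real.rpow_lt_rpow_of_neg hs hst (by linarith))) hp0
  have key : ∀ Y : ℕ → X, IsMinSeq f p t x Y →
      QHL f p s x ≤ QHL f p t x + A * (liminf (fun n => dist x (Y n)) atTop) ^ p := by
    intro Y hY
    set l := liminf (fun n => dist x (Y n)) atTop with hl
    have hcob : IsCoboundedUnder (· ≥ ·) atTop (fun n => dist x (Y n)) :=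
      Filter.IsBoundedUnder.isCoboundedUnder_ge ⟨_, minseq_dist_le hf hp ht hY⟩
    have hYt : Tendsto (fun n => HLF f p t x (Y n)) atTop (𝓝 (⨅ z, HLF f p t x z)) := hY
    have hforall : ∀ ε > 0, QHL f p s x ≤ QHL f p t x + ε + A * (l + ε) ^ p := by
      intro ε hε
      have h1 : ∀ᶠ n in atTop, HLF f p t x (Y n) ≤ (⨅ z, HLF f p t x z) + ε :=
        hYt.eventually_le_const (lt_add_of_pos_right _ hε)
      have h2 : ∃ᶠ n in atTop, dist x (Y n) < l + ε :=
        frequently_lt_of_liminf_lt hcob (lt_add_of_pos_right _ hε)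
      obtain ⟨n, hn2, hn1⟩ := (h2.and_eventually h1).exists
      have hQs : QHL f p s x ≤ HLF f p s x (Y n) := by
        rw [QHL, if_neg hs.ne']
        exact ciInf_le (hlf_bddBelow hf hp hs) _
      have hdp : dist x (Y n) ^ p ≤ (l + ε) ^ p :=
        Real.rpow_le_rpow dist_nonneg hn2.le hp0.le
      have hQt : QHL f p t x = ⨅ z, HLF f p t x z := if_neg ht.ne'
      rw [hQt]
      calc QHL f p s x ≤ HLF f p s x (Y n) := hQs
        _ = HLF f p t x (Y n) + A * dist x (Y n) ^ p := hlf_shift hp hs ht x (Y n)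
        _ ≤ ((⨅ z, HLF f p t x z) + ε) + A * (l + ε) ^ p := by
            have := mul_le_mul_of_nonneg_left hdp hApos.le
            linarith
    have hT : Tendsto (fun ε : ℝ => QHL f p t x + ε + A * (l + ε) ^ p) (𝓝[>] (0:ℝ))
        (𝓝 (QHL f p t x + A * l ^ p)) := by
      have hc : Tendsto (fun ε : ℝ => QHL f p t x + ε + A * (l + ε) ^ p) (𝓝 0)
          (𝓝 (QHL f p t x + 0 + A * (l + 0) ^ p)) :=
        ((tendsto_const_nhds.add tendsto_id).add
          (tendsto_const_nhds.mul
            ((tendsto_const_nhds.add tendsto_id).rpow_const (Or.inr hp0.le))))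
      simpa using hc.mono_left nhdsWithin_le_nhds
    exact ge_of_tendsto hT (eventually_nhdsWithin_of_forall fun ε hε => hforall ε hε)
  by_cases hQ : QHL f p s x - QHL f p t x ≤ 0
  · exact hQ.trans (mul_nonneg hApos.le
      (Real.rpow_nonneg (dminus_nonneg hf hp ht) p))
  push_neg at hQ
  set c := (QHL f p s x - QHL f p t x) / A with hc
  have hc0 : 0 ≤ c := le_of_lt (div_pos (by linarith) hApos)
  have hDm : c ^ p⁻¹ ≤ Dminus f p x t := by
    rw [Dminus, if_neg ht.ne']
    refine le_csInf (dset_nonempty' hf hp ht) ?_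
    rintro b ⟨Y, hY, rfl⟩
    have hb0 : 0 ≤ liminf (fun n => dist x (Y n)) atTop :=
      (minseq_limsup_facts hf hp ht hY).1
    rw [Real.rpow_inv_le_iff_of_pos hc0 hb0 hp0]
    have hk := key Y hY
    rw [hc, div_le_iff₀ hApos]
    linarith
  have h2 : c ≤ (Dminus f p x t) ^ p := by
    have := Real.rpow_le_rpow (Real.rpow_nonneg hc0 _) hDm hp0.le
    rwa [Real.rpow_inv_rpow hc0 hp0.ne'] at this
  rw [hc, div_le_iff₀ hApos] at h2
  linarith

lemma comp_lower (hf : LipschitzWith K f) (hp : 1 < p) {s t : ℝ} (hs : 0 < s) (hst : s < t) :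
    ((s ^ (1 - p) - t ^ (1 - p)) / p) * (Dplus f p x s) ^ p ≤
      QHL f p s x - QHL f p t x := by
  have ht : 0 < t := hs.trans hst
  have hne : Nonempty X := ⟨x⟩
  have hp0 : (0:ℝ) < p := by linarith
  set A := (s ^ (1 - p) - t ^ (1 - p)) / p with hA
  have hApos : 0 < A := div_pos
    (sub_pos.2 (Real.rpow_lt_rpow_of_neg hs hst (by linarith))) hp0
  have key : ∀ Y : ℕ → X, IsMinSeq f p s x Y →
      QHL f p t x ≤ QHL f p s x - A * (limsup (fun n => dist x (Y n)) atTop) ^ p := by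
    intro Y hY
    set L := limsup (fun n => dist x (Y n)) atTop with hL
    have hfacts := minseq_limsup_facts hf hp hs hY
    have hL0 : 0 ≤ L := le_trans hfacts.1 hfacts.2.1
    have hcob : IsCoboundedUnder (· ≤ ·) atTop (fun n => dist x (Y n)) :=
      Filter.IsBoundedUnder.isCoboundedUnder_le
        ⟨0, eventually_map.mpr (Eventually.of_forall fun n => dist_nonneg)⟩
    have hYt : Tendsto (fun n => HLF f p s x (Y n)) atTop (𝓝 (⨅ z, HLF f p s x z)) := hY
    have hforall : ∀ ε > 0, QHL f p t x ≤ QHL f p s x + ε - A * (max (L - ε) 0) ^ p := by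
      intro ε hε
      have h1 : ∀ᶠ n in atTop, HLF f p s x (Y n) ≤ (⨅ z, HLF f p s x z) + ε :=
        hYt.eventually_le_const (lt_add_of_pos_right _ hε)
      have h2 : ∃ᶠ n in atTop, L - ε < dist x (Y n) :=
        frequently_lt_of_lt_limsup hcob (by linarith)
      obtain ⟨n, hn2, hn1⟩ := (h2.and_eventually h1).exists
      have hQt : QHL f p t x ≤ HLF f p t x (Y n) := by
        rw [QHL, if_neg ht.ne']
        exact ciInf_le (hlf_bddBelow hf hp ht) _
      have hmax : max (L - ε) 0 ≤ dist x (Y n) := max_le hn2.le dist_nonneg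
      have hdp : (max (L - ε) 0) ^ p ≤ dist x (Y n) ^ p :=
        Real.rpow_le_rpow (le_max_right _ _) hmax hp0.le
      have hshift := hlf_shift (f := f) hp hs ht x (Y n)
      have hQs : QHL f p s x = ⨅ z, HLF f p s x z := if_neg hs.ne'
      rw [hQs]
      have hHt : HLF f p t x (Y n) = HLF f p s x (Y n) - A * dist x (Y n) ^ p := by
        rw [hshift]; ring
      calc QHL f p t x ≤ HLF f p t x (Y n) := hQt
        _ = HLF f p s x (Y n) - A * dist x (Y n) ^ p := hHt
        _ ≤ ((⨅ z, HLF f p s x z) + ε) - A * (max (L - ε) 0) ^ p := by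
            have := mul_le_mul_of_nonneg_left hdp hApos.le
            linarith
    have hT : Tendsto (fun ε : ℝ => QHL f p s x + ε - A * (max (L - ε) 0) ^ p)
        (𝓝[>] (0:ℝ)) (𝓝 (QHL f p s x - A * L ^ p)) := by
      have hc : Tendsto (fun ε : ℝ => QHL f p s x + ε - A * (max (L - ε) 0) ^ p) (𝓝 0)
          (𝓝 (QHL f p s x + 0 - A * (max (L - 0) 0) ^ p)) :=
        ((tendsto_const_nhds.add tendsto_id).sub
          (tendsto_const_nhds.mul
            (((tendsto_const_nhds.sub tendsto_id).max tendsto_const_nhds).rpow_const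
              (Or.inr hp0.le))))
      have hmx : max (L - 0) 0 = L := by rw [sub_zero, max_eq_left hL0]
      rw [hmx, add_zero] at hc
      exact hc.mono_left nhdsWithin_le_nhds
    exact ge_of_tendsto hT (eventually_nhdsWithin_of_forall fun ε hε => hforall ε hε)
  have hQnn : 0 ≤ QHL f p s x - QHL f p t x := by
    obtain ⟨Y, hY⟩ := exists_minseq (x := x) hf hp hs
    have hk := key Y hY
    have hfacts := minseq_limsup_facts hf hp hs hY
    have : 0 ≤ A * (limsup (fun n => dist x (Y n)) atTop) ^ p :=
      mul_nonneg hApos.le (Real.rpow_nonneg (le_trans hfacts.1 hfacts.2.1) _)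
    linarith
  set c := (QHL f p s x - QHL f p t x) / A with hc
  have hc0 : 0 ≤ c := div_nonneg hQnn hApos.le
  have hDp : Dplus f p x s ≤ c ^ p⁻¹ := by
    rw [Dplus, if_neg hs.ne']
    refine csSup_le (dset_nonempty hf hp hs) ?_
    rintro b ⟨Y, hY, rfl⟩
    have hfacts := minseq_limsup_facts hf hp hs hY
    have hb0 : 0 ≤ limsup (fun n => dist x (Y n)) atTop := le_trans hfacts.1 hfacts.2.1
    rw [Real.le_rpow_inv_iff_of_pos hb0 hc0 hp0]
    have hk := key Y hY
    rw [hc, le_div_iff₀ hApos]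
    linarith
  have h2 : (Dplus f p x s) ^ p ≤ c := by
    have := Real.rpow_le_rpow (dplus_nonneg hf hp hs) hDp hp0.le
    rwa [Real.rpow_inv_rpow hc0 hp0.ne'] at this
  rw [hc, le_div_iff₀ hApos] at h2
  linarith

lemma dplus_le_dminus (hf : LipschitzWith K f) (hp : 1 < p) {s t : ℝ}
    (hs : 0 < s) (hst : s < t) : Dplus f p x s ≤ Dminus f p x t := by
  have ht : 0 < t := hs.trans hst
  have hp0 : (0:ℝ) < p := by linarith
  have hApos : 0 < (s ^ (1 - p) - t ^ (1 - p)) / p := div_pos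
    (sub_pos.2 (Real.rpow_lt_rpow_of_neg hs hst (by linarith))) hp0
  have h := (comp_lower (x := x) hf hp hs hst).trans (comp_upper (x := x) hf hp hs hst)
  have h2 : (Dplus f p x s) ^ p ≤ (Dminus f p x t) ^ p :=
    le_of_mul_le_mul_left (by linarith [h]) hApos
  exact (Real.rpow_le_rpow_iff (dplus_nonneg hf hp hs) (dminus_nonneg hf hp ht) hp0).mp h2


lemma rpow_sub_le_mvt (hp : 1 < p) {s t : ℝ} (hs : 0 < s) (hst : s < t) :
    s ^ (1 - p) - t ^ (1 - p) ≤ (p - 1) * s ^ (-p) * (t - s) := by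
  have hderiv : ∀ r ∈ Ioo s t, HasDerivAt (fun r : ℝ => r ^ (1 - p))
      ((1 - p) * r ^ (-p)) r := by
    intro r hr
    have hr0 : 0 < r := hs.trans hr.1
    have := Real.hasDerivAt_rpow_const (x := r) (p := 1 - p) (Or.inl hr0.ne')
    rwa [show (1:ℝ) - p - 1 = -p by ring] at this
  have hcont : ContinuousOn (fun r : ℝ => r ^ (1 - p)) (Icc s t) := fun r hr =>
    (Real.continuousAt_rpow_const r _ (Or.inl (ne_of_gt (lt_of_lt_of_le hs hr.1)))).continuousWithinAt
  obtain ⟨c, hc, hceq⟩ := exists_hasDerivAt_eq_slope (fun r : ℝ => r ^ (1 - p))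
    (fun r => (1 - p) * r ^ (-p)) hst hcont hderiv
  have hts : 0 < t - s := sub_pos.2 hst
  rw [eq_div_iff hts.ne'] at hceq
  have hcs : c ^ (-p) ≤ s ^ (-p) :=
    Real.rpow_le_rpow_of_nonpos hs hc.1.le (by linarith)
  have h1 : s ^ (1 - p) - t ^ (1 - p) = (p - 1) * c ^ (-p) * (t - s) := by
    have : (p - 1) * c ^ (-p) * (t - s) = -((1 - p) * c ^ (-p) * (t - s)) := by ring
    rw [this, hceq]; ring
  rw [h1]
  have hcp : 0 ≤ c ^ (-p) := Real.rpow_nonneg (hs.trans hc.1).le _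
  have := mul_le_mul_of_nonneg_right
    (mul_le_mul_of_nonneg_left hcs (by linarith : (0:ℝ) ≤ p - 1)) hts.le
  linarith

lemma qhl_zero : QHL f p 0 x = f x := by simp [QHL]

lemma qhl_antitone (hf : LipschitzWith K f) (hp : 1 < p) {s t : ℝ}
    (hs : 0 ≤ s) (hst : s ≤ t) : QHL f p t x ≤ QHL f p s x := by
  rcases eq_or_lt_of_le hst with rfl | hst'
  · exact le_refl _
  rcases eq_or_lt_of_le hs with rfl | hs'
  · rw [qhl_zero]
    exact qhl_le_fx hf hp (by linarith)
  · have hp0 : (0:ℝ) < p := by linarith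
    have hApos : 0 < (s ^ (1 - p) - t ^ (1 - p)) / p := div_pos
      (sub_pos.2 (Real.rpow_lt_rpow_of_neg hs' hst' (by linarith))) hp0
    have h := comp_lower (x := x) hf hp hs' hst'
    have h0 : 0 ≤ ((s ^ (1 - p) - t ^ (1 - p)) / p) * (Dplus f p x s) ^ p :=
      mul_nonneg hApos.le (Real.rpow_nonneg (dplus_nonneg hf hp hs') _)
    linarith

lemma qhl_lip (hf : LipschitzWith K f) (hpq : p.HolderConjugate q) {s t : ℝ}
    (hs : 0 ≤ s) (hst : s < t) :
    QHL f p s x - QHL f p t x ≤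
      max ((p - 1) / p * (max 1 ((p * ((K : ℝ) + 1)) ^ (1 / (p - 1)))) ^ p * 2 ^ p)
        (2 * (K : ℝ) ^ q / q) * (t - s) := by
  have hp : 1 < p := hpq.lt
  have hp0 : (0:ℝ) < p := hpq.pos
  have hq0 : 0 < q := hpq.symm.pos
  have ht : 0 < t := lt_of_le_of_lt hs hst
  set C0 := max 1 ((p * ((K : ℝ) + 1)) ^ (1 / (p - 1))) with hC0def
  have hC00 : (0:ℝ) ≤ C0 := le_trans zero_le_one (le_max_left _ _)
  set LL := max ((p - 1) / p * C0 ^ p * 2 ^ p) (2 * (K : ℝ) ^ q / q) with hLLdef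
  rcases le_or_gt s (t / 2) with hcase | hcase
  · have h1 : QHL f p s x ≤ f x := qhl_le_fx hf hp hs
    have h2 : f x - (K : ℝ) ^ q * t / q ≤ QHL f p t x := qhl_lb hf hpq ht
    have hKq : 0 ≤ (K : ℝ) ^ q / q :=
      div_nonneg (Real.rpow_nonneg K.coe_nonneg q) hq0.le
    have hmid : (K : ℝ) ^ q * t / q ≤ (2 * (K : ℝ) ^ q / q) * (t - s) := by
      have htle : t ≤ 2 * (t - s) := by linarith
      have := mul_le_mul_of_nonneg_left htle hKq
      calc (K : ℝ) ^ q * t / q = ((K : ℝ) ^ q / q) * t := by ring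
        _ ≤ ((K : ℝ) ^ q / q) * (2 * (t - s)) := this
        _ = (2 * (K : ℝ) ^ q / q) * (t - s) := by ring
    have hfin : (2 * (K : ℝ) ^ q / q) * (t - s) ≤ LL * (t - s) :=
      mul_le_mul_of_nonneg_right (le_max_right _ _) (by linarith)
    linarith
  · have hs0 : 0 < s := lt_of_le_of_lt (by linarith : (0:ℝ) ≤ t / 2) hcase
    have h1 := comp_upper (x := x) hf hp hs0 hst
    have hA_le : (s ^ (1 - p) - t ^ (1 - p)) / p ≤ (p - 1) / p * s ^ (-p) * (t - s) := by
      have h := rpow_sub_le_mvt hp hs0 hst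
      have heq : ((p - 1) * s ^ (-p) * (t - s)) / p = (p - 1) / p * s ^ (-p) * (t - s) := by
        ring
      calc (s ^ (1 - p) - t ^ (1 - p)) / p ≤ ((p - 1) * s ^ (-p) * (t - s)) / p :=
            (div_le_div_iff_of_pos_right hp0).mpr h
        _ = _ := heq
    have hDm : Dminus f p x t ≤ C0 * t :=
      (dminus_le_dplus hf hp ht).trans (dplus_le hf hp ht)
    have hDmp : (Dminus f p x t) ^ p ≤ (C0 * t) ^ p :=
      Real.rpow_le_rpow (dminus_nonneg hf hp ht) hDm hp0.le
    have hApos : 0 ≤ (s ^ (1 - p) - t ^ (1 - p)) / p := le_of_lt (div_pos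
      (sub_pos.2 (Real.rpow_lt_rpow_of_neg hs0 hst (by linarith))) hp0)
    have hcoef0 : 0 ≤ (p - 1) / p * s ^ (-p) * (t - s) :=
      mul_nonneg (mul_nonneg (div_nonneg (by linarith) hp0.le)
        (Real.rpow_nonneg hs0.le _)) (by linarith)
    have step1 : QHL f p s x - QHL f p t x ≤
        ((p - 1) / p * s ^ (-p) * (t - s)) * (C0 * t) ^ p := by
      calc QHL f p s x - QHL f p t x
          ≤ ((s ^ (1 - p) - t ^ (1 - p)) / p) * (Dminus f p x t) ^ p := h1
        _ ≤ ((p - 1) / p * s ^ (-p) * (t - s)) * (C0 * t) ^ p :=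
            mul_le_mul hA_le hDmp (Real.rpow_nonneg (dminus_nonneg hf hp ht) _) hcoef0
    have e1 : (C0 * t) ^ p = C0 ^ p * t ^ p := Real.mul_rpow hC00 ht.le
    have e2 : s ^ (-p) = (s ^ p)⁻¹ := Real.rpow_neg hs0.le p
    have e3 : (t / s) ^ p = t ^ p / s ^ p := Real.div_rpow ht.le hs0.le p
    have hsp : (0:ℝ) < s ^ p := Real.rpow_pos_of_pos hs0 p
    have e4 : (t / s) ^ p ≤ 2 ^ p := by
      refine Real.rpow_le_rpow (div_nonneg ht.le hs0.le) ?_ hp0.le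
      rw [div_le_iff₀ hs0]
      linarith
    have step2 : ((p - 1) / p * s ^ (-p) * (t - s)) * (C0 * t) ^ p =
        ((p - 1) / p * C0 ^ p * (t / s) ^ p) * (t - s) := by
      rw [e1, e2, e3]
      field_simp
    have step3 : ((p - 1) / p * C0 ^ p * (t / s) ^ p) * (t - s) ≤
        ((p - 1) / p * C0 ^ p * 2 ^ p) * (t - s) := by
      refine mul_le_mul_of_nonneg_right (mul_le_mul_of_nonneg_left e4 ?_) (by linarith)
      exact mul_nonneg (div_nonneg (by linarith) hp0.le) (Real.rpow_nonneg hC00 _)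
    have step4 : ((p - 1) / p * C0 ^ p * 2 ^ p) * (t - s) ≤ LL * (t - s) :=
      mul_le_mul_of_nonneg_right (le_max_left _ _) (by linarith)
    linarith

end Aux

theorem stmt3 [MetricSpace X] (f : X → ℝ) (K : ℝ≥0) (hf : LipschitzWith K f)
    (p q : ℝ) (hp : 1 < p) (hq : 1 / p + 1 / q = 1) (x : X) :
    (∃ L : ℝ≥0, LipschitzOnWith L (fun t => QHL f p t x) (Ici 0)) ∧
    ∃ N : Set ℝ, N.Countable ∧ ∀ t : ℝ, 0 < t → t ∉ N →
      Dplus f p x t = Dminus f p x t ∧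
      HasDerivAt (fun s => QHL f p s x) (-(1 / q) * (Dplus f p x t / t) ^ p) t := by
  have hne : Nonempty X := ⟨x⟩
  have hpq : p.HolderConjugate q := Real.holderConjugate_iff.mpr ⟨hp, by rw [← one_div, ← one_div]; exact hq⟩
  have hp0 : (0:ℝ) < p := hpq.pos
  have hq0 : (0:ℝ) < q := hpq.symm.pos
  constructor
  · -- Lipschitz part
    set C0 := max 1 ((p * ((K : ℝ) + 1)) ^ (1 / (p - 1))) with hC0def
    set LL := max ((p - 1) / p * C0 ^ p * 2 ^ p) (2 * (K : ℝ) ^ q / q) with hLLdef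
    have hLL0 : 0 ≤ LL :=
      le_trans (div_nonneg (by positivity) hq0.le) (le_max_right _ _)
    refine ⟨LL.toNNReal, LipschitzOnWith.of_dist_le_mul ?_⟩
    intro a ha b hb
    have hcoe : (LL.toNNReal : ℝ) = LL := Real.coe_toNNReal LL hLL0
    rw [hcoe]
    have key : ∀ u ∈ Ici (0:ℝ), ∀ v ∈ Ici (0:ℝ), u ≤ v →
        dist (QHL f p u x) (QHL f p v x) ≤ LL * dist u v := by
      intro u hu v hv huv
      rcases eq_or_lt_of_le huv with rfl | huv'
      · simp
      have hmono : QHL f p v x ≤ QHL f p u x := qhl_antitone hf hp hu huv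
      have hbound := qhl_lip (x := x) hf hpq hu huv'
      rw [Real.dist_eq, abs_of_nonneg (by linarith), Real.dist_eq,
        abs_of_nonpos (by linarith : u - v ≤ 0)]
      have : -(u - v) = v - u := by ring
      rw [this]
      exact hbound
    rcases le_total a b with hab | hab
    · exact key a ha b hb hab
    · rw [dist_comm (QHL f p a x), dist_comm a b]
      exact key b hb a ha hab
  · -- derivative part
    set N1 := {u : ℝ | 0 < u ∧ Dminus f p x u < Dplus f p x u} with hN1def
    set N2 := {u : ℝ | 0 < u ∧ sSup ((fun v => Dplus f p x v) '' Ioo 0 u) < Dplus f p x u}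
      with hN2def
    set N3 := {u : ℝ | 0 < u ∧ Dplus f p x u < sInf ((fun v => Dplus f p x v) '' Ioi u)}
      with hN3def
    have hN1c : N1.Countable := by
      refine countable_of_intervals (a := fun u => Dminus f p x u)
        (b := fun u => Dplus f p x u) (fun u hu => hu.2) ?_
      intro u hu v hv huv
      exact dplus_le_dminus hf hp hu.1 huv
    have hN2c : N2.Countable := by
      refine countable_of_intervals
        (a := fun u => sSup ((fun v => Dplus f p x v) '' Ioo 0 u))
        (b := fun u => Dplus f p x u) (fun u hu => hu.2) ?_
      intro u hu v hv huv
      refine le_csSup ⟨Dminus f p x v, ?_⟩ ⟨u, ⟨hu.1, huv⟩, rfl⟩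
      rintro _ ⟨w, hw, rfl⟩
      exact dplus_le_dminus hf hp hw.1 hw.2
    have hN3c : N3.Countable := by
      refine countable_of_intervals (a := fun u => Dplus f p x u)
        (b := fun u => sInf ((fun v => Dplus f p x v) '' Ioi u)) (fun u hu => hu.2) ?_
      intro u hu v hv huv
      refine csInf_le ⟨0, ?_⟩ ⟨v, huv, rfl⟩
      rintro _ ⟨w, hw, rfl⟩
      exact dplus_nonneg hf hp (hu.1.trans hw)
    refine ⟨N1 ∪ N2 ∪ N3, (hN1c.union hN2c).union hN3c, ?_⟩
    intro t ht htN
    simp only [Set.mem_union, not_or] at htN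
    obtain ⟨⟨htN1, htN2⟩, htN3⟩ := htN
    have hn1 : ¬(Dminus f p x t < Dplus f p x t) := fun h => htN1 ⟨ht, h⟩
    have hn2 : ¬(sSup ((fun v => Dplus f p x v) '' Ioo 0 t) < Dplus f p x t) :=
      fun h => htN2 ⟨ht, h⟩
    have hn3 : ¬(Dplus f p x t < sInf ((fun v => Dplus f p x v) '' Ioi t)) :=
      fun h => htN3 ⟨ht, h⟩
    have heq : Dplus f p x t = Dminus f p x t :=
      le_antisymm (not_lt.mp hn1) (dminus_le_dplus hf hp ht)
    refine ⟨heq, ?_⟩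
    -- sup / inf identities
    have hIoo_ne : ((fun v => Dplus f p x v) '' Ioo 0 t).Nonempty :=
      ⟨Dplus f p x (t / 2), ⟨t / 2, ⟨by linarith, by linarith⟩, rfl⟩⟩
    have hIoi_ne : ((fun v => Dplus f p x v) '' Ioi t).Nonempty :=
      ⟨Dplus f p x (t + 1), ⟨t + 1, by simp only [mem_Ioi]; linarith, rfl⟩⟩
    have hsup_eq : sSup ((fun v => Dplus f p x v) '' Ioo 0 t) = Dplus f p x t := by
      refine le_antisymm ?_ (not_lt.mp hn2)
      refine csSup_le hIoo_ne ?_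
      rintro _ ⟨v, hv, rfl⟩
      exact (dplus_le_dminus hf hp hv.1 hv.2).trans (dminus_le_dplus hf hp ht)
    have hinf_eq : sInf ((fun v => Dplus f p x v) '' Ioi t) = Dplus f p x t := by
      refine le_antisymm (not_lt.mp hn3) ?_
      refine le_csInf hIoi_ne ?_
      rintro _ ⟨v, hv, rfl⟩
      exact (dplus_le_dminus hf hp ht hv).trans (dminus_le_dplus hf hp (ht.trans hv))
    -- one-sided limits
    have hDpleft : Tendsto (fun u => Dplus f p x u) (𝓝[<] t) (𝓝 (Dplus f p x t)) := by
      refine tendsto_order.2 ⟨?_, ?_⟩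
      · intro c hc
        rw [← hsup_eq] at hc
        obtain ⟨_, ⟨v, hv, rfl⟩, hcv⟩ := exists_lt_of_lt_csSup hIoo_ne hc
        filter_upwards [Ioo_mem_nhdsLT_of_mem
          (show t ∈ Ioc v t from ⟨hv.2, le_refl t⟩)] with u hu
        exact hcv.trans_le ((dplus_le_dminus hf hp hv.1 hu.1).trans
          (dminus_le_dplus hf hp (hv.1.trans hu.1)))
      · intro c hc
        filter_upwards [Ioo_mem_nhdsLT_of_mem
          (show t ∈ Ioc 0 t from ⟨ht, le_refl t⟩)] with u hu
        exact lt_of_le_of_lt ((dplus_le_dminus hf hp hu.1 hu.2).trans heq.ge) hc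
    have hDmright : Tendsto (fun u => Dminus f p x u) (𝓝[>] t) (𝓝 (Dplus f p x t)) := by
      refine tendsto_order.2 ⟨?_, ?_⟩
      · intro c hc
        filter_upwards [self_mem_nhdsWithin] with u hu
        exact hc.trans_le (dplus_le_dminus hf hp ht hu)
      · intro c hc
        rw [← hinf_eq] at hc
        obtain ⟨_, ⟨v, hv, rfl⟩, hvc⟩ := exists_lt_of_csInf_lt hIoi_ne hc
        filter_upwards [Ioo_mem_nhdsGT_of_mem
          (show t ∈ Ico t v from ⟨le_refl t, hv⟩)] with u hu
        have huu : 0 < u := ht.trans hu.1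
        exact lt_of_le_of_lt ((dminus_le_dplus hf hp huu).trans
          ((dplus_le_dminus hf hp huu hu.2).trans (dminus_le_dplus hf hp (ht.trans hv)))) hvc
    -- difference quotient of the kernel
    have hgder : HasDerivAt (fun r : ℝ => r ^ (1 - p)) ((1 - p) * t ^ (-p)) t := by
      have := Real.hasDerivAt_rpow_const (x := t) (p := 1 - p) (Or.inl ht.ne')
      rwa [show (1:ℝ) - p - 1 = -p by ring] at this
    have hDQ : Tendsto (fun u => (u ^ (1 - p) - t ^ (1 - p)) / (p * (u - t)))
        (𝓝[≠] t) (𝓝 ((1 - p) * t ^ (-p) / p)) := by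
      have h := (hasDerivAt_iff_tendsto_slope.mp hgder).div_const p
      refine h.congr fun u => ?_
      rw [slope_def_field]
      rw [div_div, mul_comm]
    -- target value
    have hDt0 : 0 ≤ Dplus f p x t := dplus_nonneg hf hp ht
    have hval : (1 - p) * t ^ (-p) / p * (Dplus f p x t) ^ p =
        -(1 / q) * (Dplus f p x t / t) ^ p := by
      rw [Real.div_rpow hDt0 ht.le, Real.rpow_neg ht.le]
      have h1q : 1 / q = (p - 1) / p := by
        have : 1 / q = 1 - 1 / p := by linarith
        rw [this]
        field_simp
      rw [h1q]
      ring
    -- bound functions tendsto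
    have hFb : Tendsto (fun u => if u < t then Dminus f p x t else Dminus f p x u)
        (𝓝[≠] t) (𝓝 (Dplus f p x t)) := by
      rw [← nhdsLT_sup_nhdsGT, tendsto_sup]
      constructor
      · have hconst : Tendsto (fun _ : ℝ => Dminus f p x t) (𝓝[<] t)
            (𝓝 (Dplus f p x t)) := by
          rw [heq]; exact tendsto_const_nhds
        refine hconst.congr' ?_
        filter_upwards [self_mem_nhdsWithin] with u hu
        rw [if_pos (show u < t from hu)]
      · refine hDmright.congr' ?_
        filter_upwards [self_mem_nhdsWithin] with u hu
        rw [if_neg (not_lt.mpr (le_of_lt (show t < u from hu)))]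
    have hEb : Tendsto (fun u => if u < t then Dplus f p x u else Dplus f p x t)
        (𝓝[≠] t) (𝓝 (Dplus f p x t)) := by
      rw [← nhdsLT_sup_nhdsGT, tendsto_sup]
      constructor
      · refine hDpleft.congr' ?_
        filter_upwards [self_mem_nhdsWithin] with u hu
        rw [if_pos (show u < t from hu)]
      · refine (tendsto_const_nhds (α := ℝ)).congr' ?_
        filter_upwards [self_mem_nhdsWithin] with u hu
        rw [if_neg (not_lt.mpr (le_of_lt (show t < u from hu)))]
    have hlb : Tendsto (fun u => ((u ^ (1 - p) - t ^ (1 - p)) / (p * (u - t))) *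
        ((if u < t then Dminus f p x t else Dminus f p x u) ^ p)) (𝓝[≠] t)
        (𝓝 ((1 - p) * t ^ (-p) / p * (Dplus f p x t) ^ p)) :=
      hDQ.mul (hFb.rpow_const (Or.inr hp0.le))
    have hub : Tendsto (fun u => ((u ^ (1 - p) - t ^ (1 - p)) / (p * (u - t))) *
        ((if u < t then Dplus f p x u else Dplus f p x t) ^ p)) (𝓝[≠] t)
        (𝓝 ((1 - p) * t ^ (-p) / p * (Dplus f p x t) ^ p)) :=
      hDQ.mul (hEb.rpow_const (Or.inr hp0.le))
    -- sandwich
    have hsand : ∀ᶠ u in 𝓝[≠] t,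
        ((u ^ (1 - p) - t ^ (1 - p)) / (p * (u - t))) *
          ((if u < t then Dminus f p x t else Dminus f p x u) ^ p) ≤
            slope (fun s => QHL f p s x) t u ∧
        slope (fun s => QHL f p s x) t u ≤
          ((u ^ (1 - p) - t ^ (1 - p)) / (p * (u - t))) *
            ((if u < t then Dplus f p x u else Dplus f p x t) ^ p) := by
      have hpos : ∀ᶠ u in 𝓝[≠] t, 0 < u :=
        (eventually_gt_nhds ht).filter_mono nhdsWithin_le_nhds
      filter_upwards [hpos, self_mem_nhdsWithin] with u hu0 hut
      have hut' : u ≠ t := hut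
      have hslope_eq : slope (fun s => QHL f p s x) t u =
          (QHL f p u x - QHL f p t x) * (u - t)⁻¹ := by
        rw [slope_def_field, div_eq_mul_inv]
      have hpne : p ≠ 0 := hp0.ne'
      have hutne : u - t ≠ 0 := sub_ne_zero.2 hut'
      rcases lt_or_gt_of_ne hut' with hlt | hgt
      · have h1 := comp_lower (x := x) hf hp hu0 hlt
        have h2 := comp_upper (x := x) hf hp hu0 hlt
        have hinv : (u - t)⁻¹ ≤ 0 := inv_nonpos.2 (by linarith)
        rw [if_pos hlt, if_pos hlt]
        constructor
        · have hlbeq : ((u ^ (1 - p) - t ^ (1 - p)) / (p * (u - t))) *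
              (Dminus f p x t ^ p) =
              (((u ^ (1 - p) - t ^ (1 - p)) / p) * (Dminus f p x t) ^ p) * (u - t)⁻¹ := by
            field_simp
            try ring
          rw [hlbeq, hslope_eq]
          exact mul_le_mul_of_nonpos_right h2 hinv
        · have hubeq : ((u ^ (1 - p) - t ^ (1 - p)) / (p * (u - t))) *
              (Dplus f p x u ^ p) =
              (((u ^ (1 - p) - t ^ (1 - p)) / p) * (Dplus f p x u) ^ p) * (u - t)⁻¹ := by
            field_simp
            try ring
          rw [hubeq, hslope_eq]
          exact mul_le_mul_of_nonpos_right h1 hinv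
      · have h1 := comp_lower (x := x) hf hp ht hgt
        have h2 := comp_upper (x := x) hf hp ht hgt
        have hinv : 0 ≤ (u - t)⁻¹ := le_of_lt (inv_pos.2 (by linarith))
        have hnlt : ¬ u < t := not_lt.mpr (le_of_lt hgt)
        rw [if_neg hnlt, if_neg hnlt]
        constructor
        · have hlbeq : ((u ^ (1 - p) - t ^ (1 - p)) / (p * (u - t))) *
              (Dminus f p x u ^ p) =
              (-(((t ^ (1 - p) - u ^ (1 - p)) / p) * (Dminus f p x u) ^ p)) * (u - t)⁻¹ := by
            field_simp
            try ring
          have h2' : -(((t ^ (1 - p) - u ^ (1 - p)) / p) * (Dminus f p x u) ^ p) ≤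
              QHL f p u x - QHL f p t x := by linarith
          rw [hlbeq, hslope_eq]
          exact mul_le_mul_of_nonneg_right h2' hinv
        · have hubeq : ((u ^ (1 - p) - t ^ (1 - p)) / (p * (u - t))) *
              (Dplus f p x t ^ p) =
              (-(((t ^ (1 - p) - u ^ (1 - p)) / p) * (Dplus f p x t) ^ p)) * (u - t)⁻¹ := by
            field_simp
            try ring
          have h1' : QHL f p u x - QHL f p t x ≤
              -(((t ^ (1 - p) - u ^ (1 - p)) / p) * (Dplus f p x t) ^ p) := by linarith
          rw [hubeq, hslope_eq]
          exact mul_le_mul_of_nonneg_right h1' hinv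
    rw [hasDerivAt_iff_tendsto_slope, ← hval]
    exact tendsto_of_tendsto_of_tendsto_of_le_of_le' hlb hub
      (hsand.mono fun u h => h.1) (hsand.mono fun u h => h.2)
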